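/- A permutation w in S_n avoids the pattern 321 if and only if no reduced word of w contains σ_i σ_{i+1} σ_i as a consecutive factor for any i. -/

import Mathlib

/-- The adjacent transposition `σ_{i+1} = (i+1, i+2)` (1-indexed), acting on `Fin n`;
here `i : Fin (n-1)` is the 0-indexed label, swapping positions `i` and `i+1`. -/
def sgen (n : ℕ) (i : Fin (n - 1)) : Equiv.Perm (Fin n) :=
  Equiv.swap ⟨i.1, by have := i.2; omega⟩ ⟨i.1 + 1, by have := i.2; omega⟩

/-- `l` is a reduced word for `w`: its product is `w` and no shorter word of
adjacent transpositions has product `w`. -/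
def IsReducedWord (n : ℕ) (w : Equiv.Perm (Fin n)) (l : List (Fin (n - 1))) : Prop :=
  (l.map (sgen n)).prod = w ∧
    ∀ l' : List (Fin (n - 1)), (l'.map (sgen n)).prod = w → l.length ≤ l'.length

/-- Bruhat order on `S_n` via the subword property: `v ≤ w` iff some reduced word
of `v` is a (not necessarily consecutive) subword of some reduced word of `w`. -/
def BruhatLe (n : ℕ) (v w : Equiv.Perm (Fin n)) : Prop :=
  ∃ lw lv : List (Fin (n - 1)),
    IsReducedWord n w lw ∧ IsReducedWord n v lv ∧ lv.Sublist lw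

/-- `w` contains the pattern `321`. -/
def Contains321 {n : ℕ} (w : Equiv.Perm (Fin n)) : Prop :=
  ∃ i j k : Fin n, i < j ∧ j < k ∧ w k < w j ∧ w j < w i

/-- `w` contains the pattern `3412`. -/
def Contains3412 {n : ℕ} (w : Equiv.Perm (Fin n)) : Prop :=
  ∃ i j k l : Fin n, i < j ∧ j < k ∧ k < l ∧ w k < w l ∧ w l < w i ∧ w i < w j

/-- `w` contains the pattern `231`. -/
def Contains231 {n : ℕ} (w : Equiv.Perm (Fin n)) : Prop :=
  ∃ i j k : Fin n, i < j ∧ j < k ∧ w k < w i ∧ w i < w j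

/-- `w` contains the pattern `312`. -/
def Contains312 {n : ℕ} (w : Equiv.Perm (Fin n)) : Prop :=
  ∃ i j k : Fin n, i < j ∧ j < k ∧ w j < w k ∧ w k < w i

/-!
The length of `w` is its number of inversions: right multiplication by `σ_i` adds the inversion
`(i, i + 1)` when `w i < w (i + 1)` and removes it otherwise. So in a reduced word every letter
`σ_i` is an ascent of the product of the letters before it.

If a reduced word has the factor `σ_i σ_{i+1} σ_i` after a prefix with product `u`, then `u`
increases on `i, i + 1, i + 2`, and `u σ_i σ_{i+1} σ_i = u (i, i + 2)` has a `321` there; a `321`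
survives right multiplication by ascents, so `w` contains `321`. Conversely, take a `321` of `w` at
`a < b < c`. If `b - a > 1` or `c - b > 1`, that gap contains a descent `d` of `w`, and the shorter
`w σ_d` still contains `321`, so induction on the length applies. If `a, b, c` are consecutive,
then `w = u σ_a σ_{a+1} σ_a` with `u = w (a, a + 2)` and the lengths add up.
-/

open Equiv

theorem Equiv.swap_apply_of_lt_of_lt {α : Type*} [LinearOrder α] {a b c : α} (hab : a < b)
    (hbc : b < c) : swap a c b = b :=
  swap_apply_of_ne_of_ne hab.ne' hbc.ne

section AdjacentTranspositions

variable {n : ℕ}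

def sgenLo (n : ℕ) (i : Fin (n - 1)) : Fin n := ⟨i, by omega⟩

def sgenHi (n : ℕ) (i : Fin (n - 1)) : Fin n := ⟨i + 1, by omega⟩

theorem sgen_eq_swap (i : Fin (n - 1)) : sgen n i = swap (sgenLo n i) (sgenHi n i) := rfl

theorem sgenLo_lt_sgenHi (i : Fin (n - 1)) : sgenLo n i < sgenHi n i :=
  Fin.lt_def.2 (Nat.lt_succ_self _)

@[simp]
theorem val_sgenLo (i : Fin (n - 1)) : (sgenLo n i : ℕ) = i := rfl

@[simp]
theorem val_sgenHi (i : Fin (n - 1)) : (sgenHi n i : ℕ) = i + 1 := rfl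

@[simp]
theorem sgen_symm (i : Fin (n - 1)) : (sgen n i).symm = sgen n i :=
  symm_swap _ _

@[simp]
theorem sgen_sgen (i : Fin (n - 1)) (x : Fin n) : sgen n i (sgen n i x) = x :=
  swap_apply_self _ _ x

@[simp]
theorem sgen_sgenLo (i : Fin (n - 1)) : sgen n i (sgenLo n i) = sgenHi n i :=
  swap_apply_left _ _

@[simp]
theorem sgen_sgenHi (i : Fin (n - 1)) : sgen n i (sgenHi n i) = sgenLo n i :=
  swap_apply_right _ _

theorem sgen_apply_of_ne {i : Fin (n - 1)} {x : Fin n} (hlo : x ≠ sgenLo n i)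
    (hhi : x ≠ sgenHi n i) : sgen n i x = x :=
  swap_apply_of_ne_of_ne hlo hhi

@[simp]
theorem sgen_mul_self (i : Fin (n - 1)) : sgen n i * sgen n i = 1 :=
  swap_mul_self _ _

theorem sgen_lt_sgen {i : Fin (n - 1)} {x y : Fin n} (hxy : x < y)
    (hne : ¬(x = sgenLo n i ∧ y = sgenHi n i)) : sgen n i x < sgen n i y := by
  simp only [sgen_eq_swap, swap_apply_def, Fin.ext_iff, Fin.lt_def, sgenLo, sgenHi] at *
  split_ifs <;> simp_all <;> omega

theorem sgenHi_lt_sgenHi {i j : Fin (n - 1)} (hij : (j : ℕ) = i + 1) : sgenHi n i < sgenHi n j :=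
  Fin.lt_def.2 (by simp [hij])

theorem sgen_mul_sgen_mul_sgen {i j : Fin (n - 1)} (hij : (j : ℕ) = i + 1) :
    sgen n i * sgen n j * sgen n i = swap (sgenLo n i) (sgenHi n j) := by
  have hlo : sgenLo n j = sgenHi n i := Fin.ext hij
  have hhi := sgenHi_lt_sgenHi (n := n) hij
  rw [sgen_eq_swap, sgen_eq_swap j, hlo, swap_comm (sgenLo n i),
    swap_comm (sgenHi n i) (sgenHi n j),
    swap_mul_swap_mul_swap hhi.ne' ((sgenLo_lt_sgenHi i).trans hhi).ne']

def inversions (w : Perm (Fin n)) : Finset (Fin n × Fin n) :=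
  Finset.univ.filter fun p => p.1 < p.2 ∧ w p.2 < w p.1

def invCount (w : Perm (Fin n)) : ℕ := (inversions w).card

theorem mem_inversions {w : Perm (Fin n)} {p : Fin n × Fin n} :
    p ∈ inversions w ↔ p.1 < p.2 ∧ w p.2 < w p.1 := by
  simp [inversions]

theorem inversions_mul_sgen {w : Perm (Fin n)} {i : Fin (n - 1)}
    (h : w (sgenLo n i) < w (sgenHi n i)) :
    inversions (w * sgen n i) = insert (sgenLo n i, sgenHi n i)
      ((inversions w).map (prodCongr (sgen n i) (sgen n i)).toEmbedding) := by
  ext ⟨x, y⟩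
  simp only [Finset.mem_insert, Finset.mem_map_equiv, mem_inversions, Prod.mk.injEq,
    prodCongr_symm, prodCongr_apply, sgen_symm, Perm.mul_apply, Prod.map_fst, Prod.map_snd]
  constructor
  · rintro ⟨hxy, hw⟩
    by_cases hxy_i : x = sgenLo n i ∧ y = sgenHi n i
    · exact .inl hxy_i
    · exact .inr ⟨sgen_lt_sgen hxy hxy_i, hw⟩
  · rintro (⟨rfl, rfl⟩ | ⟨hxy, hw⟩)
    · simpa using ⟨sgenLo_lt_sgenHi i, h⟩
    · have hne : ¬(sgen n i x = sgenLo n i ∧ sgen n i y = sgenHi n i) := by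
        rintro ⟨hx, hy⟩
        rw [hx, hy] at hw
        exact hw.not_gt h
      simpa using And.intro (sgen_lt_sgen hxy hne) hw

theorem invCount_mul_sgen_of_lt {w : Perm (Fin n)} {i : Fin (n - 1)}
    (h : w (sgenLo n i) < w (sgenHi n i)) : invCount (w * sgen n i) = invCount w + 1 := by
  rw [invCount, inversions_mul_sgen h, Finset.card_insert_of_notMem, Finset.card_map, invCount]
  simp only [Finset.mem_map_equiv, mem_inversions, prodCongr_symm, prodCongr_apply, sgen_symm,
    Prod.map_fst, Prod.map_snd, sgen_sgenLo, sgen_sgenHi, not_and]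
  exact fun h' ↦ absurd h' (sgenLo_lt_sgenHi i).not_gt

theorem invCount_mul_sgen_of_gt {w : Perm (Fin n)} {i : Fin (n - 1)}
    (h : w (sgenHi n i) < w (sgenLo n i)) : invCount (w * sgen n i) + 1 = invCount w := by
  simpa [mul_assoc] using (invCount_mul_sgen_of_lt (w := w * sgen n i) (i := i) (by simpa)).symm

theorem lt_or_gt_apply_sgen (w : Perm (Fin n)) (i : Fin (n - 1)) :
    w (sgenLo n i) < w (sgenHi n i) ∨ w (sgenHi n i) < w (sgenLo n i) :=
  lt_or_gt_of_ne (w.injective.ne (sgenLo_lt_sgenHi i).ne)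

theorem invCount_mul_sgen_eq_add_one_iff {w : Perm (Fin n)} {i : Fin (n - 1)} :
    invCount (w * sgen n i) = invCount w + 1 ↔ w (sgenLo n i) < w (sgenHi n i) := by
  refine ⟨fun h ↦ ?_, invCount_mul_sgen_of_lt⟩
  rcases lt_or_gt_apply_sgen w i with hlt | hgt
  · exact hlt
  · have := invCount_mul_sgen_of_gt hgt
    omega

theorem invCount_mul_sgen_le (w : Perm (Fin n)) (i : Fin (n - 1)) :
    invCount (w * sgen n i) ≤ invCount w + 1 := by
  rcases lt_or_gt_apply_sgen w i with hlt | hgt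
  · exact (invCount_mul_sgen_of_lt hlt).le
  · have := invCount_mul_sgen_of_gt hgt
    omega

theorem invCount_one : invCount (1 : Perm (Fin n)) = 0 := by
  simp only [invCount, inversions, Finset.card_eq_zero, Finset.filter_eq_empty_iff]
  exact fun _ _ h ↦ lt_asymm h.1 h.2

theorem invCount_mul_prod_le (a : Perm (Fin n)) (l : List (Fin (n - 1))) :
    invCount (a * (l.map (sgen n)).prod) ≤ invCount a + l.length := by
  induction l generalizing a with
  | nil => simp
  | cons i l ih =>
    have := invCount_mul_sgen_le a i
    have := ih (a * sgen n i)
    simp only [List.map_cons, List.prod_cons, List.length_cons, ← mul_assoc]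
    omega

theorem invCount_prod_le_length (l : List (Fin (n - 1))) :
    invCount (l.map (sgen n)).prod ≤ l.length := by
  simpa [invCount_one] using invCount_mul_prod_le 1 l

theorem eq_one_of_invCount_eq_zero {w : Perm (Fin n)} (h : invCount w = 0) : w = 1 := by
  have hmono : StrictMono w := fun x y hxy ↦ by
    by_contra! hle
    have hmem : (x, y) ∈ inversions w :=
      mem_inversions.2 ⟨hxy, hle.lt_of_ne (w.injective.ne hxy.ne')⟩
    exact Finset.card_ne_zero_of_mem hmem h
  ext x
  simp [hmono.apply_eq]

theorem exists_descent_of_lt (w : Perm (Fin n)) {p q : Fin n} (hpq : p < q) (hw : w q < w p) :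
    ∃ i : Fin (n - 1), p ≤ sgenLo n i ∧ sgenHi n i ≤ q ∧
      w (sgenHi n i) < w (sgenLo n i) := by
  obtain ⟨q, hq⟩ := q
  induction q with
  | zero => exact absurd (Fin.lt_def.1 hpq) (Nat.not_lt_zero _)
  | succ m ih =>
    have hm : m < n := by omega
    have hpm_le : (p : ℕ) ≤ m := Nat.lt_succ_iff.1 (Fin.lt_def.1 hpq)
    by_cases hdesc : w ⟨m + 1, hq⟩ < w ⟨m, hm⟩
    · exact ⟨⟨m, by omega⟩, Fin.le_def.2 hpm_le, le_rfl, hdesc⟩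
    · have hpm : p < ⟨m, hm⟩ := by
        refine Fin.lt_def.2 (hpm_le.lt_of_ne fun hpm_eq ↦ ?_)
        exact hdesc (by rwa [show p = ⟨m, hm⟩ from Fin.ext hpm_eq] at hw)
      obtain ⟨i, hpi, him, hi⟩ := ih hm hpm ((not_lt.1 hdesc).trans_lt hw)
      exact ⟨i, hpi, him.trans (Fin.le_def.2 (Nat.le_succ m)), hi⟩

theorem exists_word_length_eq_invCount (w : Perm (Fin n)) :
    ∃ l : List (Fin (n - 1)), (l.map (sgen n)).prod = w ∧ l.length = invCount w := by
  induction hw : invCount w generalizing w with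
  | zero => exact ⟨[], (eq_one_of_invCount_eq_zero hw).symm, rfl⟩
  | succ k ih =>
    obtain ⟨⟨p, q⟩, hpq⟩ : (inversions w).Nonempty := by
      rw [← Finset.card_pos, ← invCount, hw]; exact k.succ_pos
    obtain ⟨hpq, hwpq⟩ := mem_inversions.1 hpq
    obtain ⟨i, -, -, hi⟩ := exists_descent_of_lt w hpq hwpq
    have hk := invCount_mul_sgen_of_gt hi
    obtain ⟨l, hl, hlen⟩ := ih (w * sgen n i) (by omega)
    exact ⟨l ++ [i], by simp [hl, mul_assoc], by simp [hlen]⟩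

theorem isReducedWord_iff {w : Perm (Fin n)} {l : List (Fin (n - 1))} :
    IsReducedWord n w l ↔ (l.map (sgen n)).prod = w ∧ l.length = invCount w := by
  refine ⟨fun ⟨hl, hmin⟩ ↦ ⟨hl, le_antisymm ?_ (hl ▸ invCount_prod_le_length l)⟩,
    fun ⟨hl, hlen⟩ ↦ ⟨hl, fun l' hl' ↦ hlen ▸ hl' ▸ invCount_prod_le_length l'⟩⟩
  obtain ⟨l', hl', hlen'⟩ := exists_word_length_eq_invCount w
  exact hlen' ▸ hmin l' hl'

theorem IsReducedWord.invCount_prod_prefix {w : Perm (Fin n)} {p q : List (Fin (n - 1))}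
    (h : IsReducedWord n w (p ++ q)) : invCount (p.map (sgen n)).prod = p.length := by
  obtain ⟨hprod, hlen⟩ := isReducedWord_iff.1 h
  have hsuffix := invCount_mul_prod_le (p.map (sgen n)).prod q
  have hp := invCount_prod_le_length p
  rw [← List.prod_append, ← List.map_append, hprod] at hsuffix
  simp only [List.length_append] at hlen
  omega

theorem invCount_mul_braid_eq_add_three_iff (u : Perm (Fin n)) {i j : Fin (n - 1)}
    (hij : (j : ℕ) = i + 1) :
    invCount (u * sgen n i * sgen n j * sgen n i) = invCount u + 3 ↔
      u (sgenLo n i) < u (sgenHi n i) ∧ u (sgenHi n i) < u (sgenHi n j) := by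
  have h₁ := invCount_mul_sgen_le u i
  have h₂ := invCount_mul_sgen_le (u * sgen n i) j
  have h₃ := invCount_mul_sgen_le (u * sgen n i * sgen n j) i
  have hsteps : invCount (u * sgen n i * sgen n j * sgen n i) = invCount u + 3 ↔
      invCount (u * sgen n i) = invCount u + 1 ∧
      invCount (u * sgen n i * sgen n j) = invCount (u * sgen n i) + 1 ∧
      invCount (u * sgen n i * sgen n j * sgen n i) = invCount (u * sgen n i * sgen n j) + 1 := by
    omega
  rw [hsteps, invCount_mul_sgen_eq_add_one_iff, invCount_mul_sgen_eq_add_one_iff,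
    invCount_mul_sgen_eq_add_one_iff]
  have hlo : sgenLo n j = sgenHi n i := Fin.ext hij
  have hj_lo : sgen n j (sgenLo n i) = sgenLo n i :=
    sgen_apply_of_ne (Fin.ne_of_val_ne (show (i : ℕ) ≠ j by omega))
      (Fin.ne_of_val_ne (show (i : ℕ) ≠ j + 1 by omega))
  have hj_hi : sgen n j (sgenHi n i) = sgenHi n j := hlo ▸ sgen_sgenLo j
  have hi_hi : sgen n i (sgenHi n j) = sgenHi n j :=
    sgen_apply_of_ne (Fin.ne_of_val_ne (show (j : ℕ) + 1 ≠ i by omega))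
      (Fin.ne_of_val_ne (show (j : ℕ) + 1 ≠ i + 1 by omega))
  simp only [hlo, Perm.mul_apply, sgen_sgenLo, sgen_sgenHi, hj_lo, hj_hi, hi_hi]
  exact ⟨fun h ↦ ⟨h.1, h.2.2⟩, fun h ↦ ⟨h.1, h.1.trans h.2, h.2⟩⟩

def HasBraidFactor {m : ℕ} (l : List (Fin m)) : Prop :=
  ∃ (x y : List (Fin m)) (i j : Fin m), (j : ℕ) = i + 1 ∧ l = x ++ i :: j :: i :: y

theorem contains321_mul_sgen_of_ne {w : Perm (Fin n)} {i : Fin (n - 1)} {a b c : Fin n}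
    (hab : a < b) (hbc : b < c) (hcb : w c < w b) (hba : w b < w a)
    (hab_i : ¬(a = sgenLo n i ∧ b = sgenHi n i))
    (hbc_i : ¬(b = sgenLo n i ∧ c = sgenHi n i)) :
    Contains321 (w * sgen n i) :=
  ⟨sgen n i a, sgen n i b, sgen n i c, sgen_lt_sgen hab hab_i, sgen_lt_sgen hbc hbc_i,
    by simpa using hcb, by simpa using hba⟩

theorem Contains321.mul_sgen_of_lt {w : Perm (Fin n)} {i : Fin (n - 1)} (hw : Contains321 w)
    (h : w (sgenLo n i) < w (sgenHi n i)) : Contains321 (w * sgen n i) := by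
  obtain ⟨a, b, c, hab, hbc, hcb, hba⟩ := hw
  refine contains321_mul_sgen_of_ne hab hbc hcb hba ?_ ?_
  · rintro ⟨rfl, rfl⟩; exact hba.not_gt h
  · rintro ⟨rfl, rfl⟩; exact hcb.not_gt h

theorem IsReducedWord.ascent {w : Perm (Fin n)} {p q : List (Fin (n - 1))} {i : Fin (n - 1)}
    (h : IsReducedWord n w (p ++ i :: q)) :
    (p.map (sgen n)).prod (sgenLo n i) < (p.map (sgen n)).prod (sgenHi n i) := by
  have hp := h.invCount_prod_prefix
  have hpi := (show p ++ i :: q = (p ++ [i]) ++ q by simp) ▸ h |>.invCount_prod_prefix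
  rw [← invCount_mul_sgen_eq_add_one_iff, hp]
  simpa using hpi

theorem Contains321.of_isReducedWord_append {w : Perm (Fin n)} {p q : List (Fin (n - 1))}
    (h : IsReducedWord n w (p ++ q)) (hp : Contains321 (p.map (sgen n)).prod) : Contains321 w := by
  induction q generalizing p with
  | nil =>
    rw [List.append_nil] at h
    rwa [h.1] at hp
  | cons i q ih =>
    refine ih (p := p ++ [i]) (by simpa using h) ?_
    simpa using hp.mul_sgen_of_lt h.ascent

theorem IsReducedWord.append_sgen {v : Perm (Fin n)} {l : List (Fin (n - 1))} {i : Fin (n - 1)}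
    (hl : IsReducedWord n v l) (h : v (sgenLo n i) < v (sgenHi n i)) :
    IsReducedWord n (v * sgen n i) (l ++ [i]) := by
  obtain ⟨hprod, hlen⟩ := isReducedWord_iff.1 hl
  exact isReducedWord_iff.2 ⟨by simp [hprod], by simp [hlen, invCount_mul_sgen_of_lt h]⟩

theorem IsReducedWord.append_braid {u : Perm (Fin n)} {l : List (Fin (n - 1))}
    {i j : Fin (n - 1)} (hl : IsReducedWord n u l) (hij : (j : ℕ) = i + 1)
    (h : u (sgenLo n i) < u (sgenHi n i) ∧ u (sgenHi n i) < u (sgenHi n j)) :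
    IsReducedWord n (u * sgen n i * sgen n j * sgen n i) (l ++ [i, j, i]) := by
  obtain ⟨hprod, hlen⟩ := isReducedWord_iff.1 hl
  refine isReducedWord_iff.2 ⟨by simp [hprod, mul_assoc], ?_⟩
  simp [hlen, (invCount_mul_braid_eq_add_three_iff u hij).2 h]

theorem IsReducedWord.braid_ascent {w : Perm (Fin n)} {x y : List (Fin (n - 1))}
    {i j : Fin (n - 1)} (hl : IsReducedWord n w (x ++ i :: j :: i :: y)) (hij : (j : ℕ) = i + 1) :
    (x.map (sgen n)).prod (sgenLo n i) < (x.map (sgen n)).prod (sgenHi n i) ∧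
      (x.map (sgen n)).prod (sgenHi n i) < (x.map (sgen n)).prod (sgenHi n j) := by
  have hx := hl.invCount_prod_prefix
  have hxb := (show x ++ i :: j :: i :: y = (x ++ [i, j, i]) ++ y by simp) ▸ hl
    |>.invCount_prod_prefix
  refine (invCount_mul_braid_eq_add_three_iff _ hij).1 ?_
  simpa [hx, mul_assoc] using hxb

theorem contains321_of_isReducedWord_of_hasBraidFactor {w : Perm (Fin n)}
    {l : List (Fin (n - 1))} (hl : IsReducedWord n w l) (hb : HasBraidFactor l) :
    Contains321 w := by
  obtain ⟨x, y, i, j, hij, rfl⟩ := hb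
  set u := (x.map (sgen n)).prod
  obtain ⟨hab, hbc⟩ := hl.braid_ascent hij
  refine Contains321.of_isReducedWord_append (p := x ++ [i, j, i]) (by simpa using hl) ?_
  have hprod : ((x ++ [i, j, i]).map (sgen n)).prod = u * swap (sgenLo n i) (sgenHi n j) := by
    simp [u, ← sgen_mul_sgen_mul_sgen hij, mul_assoc]
  have hlo := sgenLo_lt_sgenHi i
  have hhi := sgenHi_lt_sgenHi (n := n) hij
  refine hprod ▸ ⟨_, _, _, hlo, hhi, ?_, ?_⟩ <;> simpa [swap_apply_of_lt_of_lt hlo hhi]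

theorem Contains321.exists_descent_or_consecutive {w : Perm (Fin n)} (hw : Contains321 w) :
    (∃ i : Fin (n - 1), w (sgenHi n i) < w (sgenLo n i) ∧ Contains321 (w * sgen n i)) ∨
      ∃ i j : Fin (n - 1), (j : ℕ) = i + 1 ∧
        w (sgenHi n j) < w (sgenHi n i) ∧ w (sgenHi n i) < w (sgenLo n i) := by
  obtain ⟨a, b, c, hab, hbc, hcb, hba⟩ := hw
  by_cases hc : (c : ℕ) = b + 1
  · by_cases hb : (b : ℕ) = a + 1
    · refine .inr ⟨⟨a, by omega⟩, ⟨a + 1, by omega⟩, rfl, ?_⟩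
      rw [show sgenHi n ⟨a + 1, _⟩ = c from Fin.ext (by simp [hb, hc]),
        show sgenHi n ⟨a, _⟩ = b from Fin.ext hb.symm]
      exact ⟨hcb, hba⟩
    · obtain ⟨i, -, hib, hi⟩ := exists_descent_of_lt w hab hba
      refine .inl ⟨i, hi, contains321_mul_sgen_of_ne hab hbc hcb hba ?_ ?_⟩
      · rintro ⟨rfl, rfl⟩
        simp at hb
      · rintro ⟨rfl, rfl⟩
        exact hib.not_gt (sgenLo_lt_sgenHi i)
  · obtain ⟨i, hbi, -, hi⟩ := exists_descent_of_lt w hbc hcb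
    refine .inl ⟨i, hi, contains321_mul_sgen_of_ne hab hbc hcb hba ?_ ?_⟩
    · rintro ⟨rfl, rfl⟩
      exact hbi.not_gt (sgenLo_lt_sgenHi i)
    · rintro ⟨rfl, rfl⟩
      simp at hc

theorem exists_isReducedWord_hasBraidFactor {w : Perm (Fin n)} (hw : Contains321 w) :
    ∃ l : List (Fin (n - 1)), IsReducedWord n w l ∧ HasBraidFactor l := by
  induction hk : invCount w using Nat.strong_induction_on generalizing w with
  | _ k ih =>
  rcases hw.exists_descent_or_consecutive with ⟨i, hi, hwi⟩ | ⟨i, j, hij, hcb, hba⟩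
  · obtain ⟨l, hl, x, y, a, b, hab, rfl⟩ :=
      ih _ (by have := invCount_mul_sgen_of_gt hi; omega) hwi rfl
    have hl' := hl.append_sgen (i := i) (by simpa using hi)
    rw [mul_assoc, sgen_mul_self, mul_one] at hl'
    exact ⟨_, hl', x, y ++ [i], a, b, hab, by simp⟩
  · set u := w * swap (sgenLo n i) (sgenHi n j)
    have hu : u * sgen n i * sgen n j * sgen n i = w := by
      rw [mul_assoc, mul_assoc, ← mul_assoc (sgen n i), sgen_mul_sgen_mul_sgen hij, mul_assoc,
        swap_mul_self, mul_one]
    have hlo := sgenLo_lt_sgenHi i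
    have hhi := sgenHi_lt_sgenHi (n := n) hij
    obtain ⟨l, hl⟩ : ∃ l, IsReducedWord n u l := by
      obtain ⟨l, hprod, hlen⟩ := exists_word_length_eq_invCount u
      exact ⟨l, isReducedWord_iff.2 ⟨hprod, hlen⟩⟩
    refine ⟨_, hu ▸ hl.append_braid hij ?_, l, [], i, j, hij, rfl⟩
    simpa [u, swap_apply_of_lt_of_lt hlo hhi] using And.intro hcb hba

end AdjacentTranspositions

/-- `w ∈ S_n` avoids the pattern `321` iff no reduced word of `w` contains
`σ_i σ_{i+1} σ_i` as a consecutive factor for any `i`. -/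
theorem avoids_321_iff_no_short_braid_factor (n : ℕ) (w : Equiv.Perm (Fin n)) :
    ¬Contains321 w ↔
      ∀ l : List (Fin (n - 1)), IsReducedWord n w l →
        ¬∃ (x y : List (Fin (n - 1))) (i j : Fin (n - 1)),
          (j : ℕ) = (i : ℕ) + 1 ∧ l = x ++ i :: j :: i :: y := by
  refine ⟨fun hw l hl hb ↦ hw (contains321_of_isReducedWord_of_hasBraidFactor hl hb),
    fun h hw ↦ ?_⟩
  obtain ⟨l, hl, hb⟩ := exists_isReducedWord_hasBraidFactor hw
  exact h l hl hb
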